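/- arXiv:2009.09409 — 3 statements merged into one kernel-verified Lean document; each statement's English description precedes it below -/
import Mathlib

section
/- For all n ≥ 0 and j ≥ 1, ∑_{k=0}^{n} C(2n,2k) 2^{-2k-1} L_{2(n-k)j} L_j^{2k} E_{2k} = (5/4)^n F_j^{2n}, expressing even powers of Fibonacci numbers via Lucas and Euler numbers. -/
def lucas : ℕ → ℕ
  | 0 => 2
  | 1 => 1
  | n + 2 => lucas (n + 1) + lucas n

noncomputable def eulerPoly : ℕ → Polynomial ℚ
  | n => Polynomial.X ^ n - Polynomial.C (1/2 : ℚ) *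
      ∑ k : Fin n, (n.choose k : ℚ) • eulerPoly k

noncomputable def eulerNumber (n : ℕ) : ℚ := 2 ^ n * (eulerPoly n).eval (1/2)

open Polynomial Finset

lemma euler_def' (n : ℕ) : eulerPoly n = X ^ n - (1/2 : ℚ) •
    ∑ k ∈ range n, (n.choose k : ℚ) • eulerPoly k := by
  rw [eulerPoly, Fin.sum_univ_eq_sum_range (fun k => (n.choose k : ℚ) • eulerPoly k),
    smul_eq_C_mul]

lemma euler_rel (n : ℕ) :
    eulerPoly n + ∑ k ∈ range (n+1), (n.choose k : ℚ) • eulerPoly k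
      = 2 • (X : ℚ[X]) ^ n := by
  rw [sum_range_succ, Nat.choose_self, Nat.cast_one, one_smul, euler_def' n]
  module

/-- real version of the Euler polynomial -/
noncomputable def pr (n : ℕ) : ℝ[X] := (eulerPoly n).map (algebraMap ℚ ℝ)

lemma pr_rel (n : ℕ) :
    pr n + ∑ k ∈ range (n+1), (n.choose k : ℝ) • pr k = 2 • (X : ℝ[X]) ^ n := by
  have := congrArg (Polynomial.map (algebraMap ℚ ℝ)) (euler_rel n)
  simpa [pr, Polynomial.map_sum, Polynomial.map_smul, Rat.smul_def] using this

lemma pr_rel' (n : ℕ) :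
    ∑ k ∈ range (n+1), (n.choose k : ℝ) • pr k = 2 • (X : ℝ[X]) ^ n - pr n := by
  rw [← pr_rel n]; abel

/-- uniqueness of solutions of the binomial relation -/
lemma uniq2 (f g : ℕ → ℝ[X])
    (h : ∀ n, f n + ∑ k ∈ range (n+1), (n.choose k : ℝ) • f k
        = g n + ∑ k ∈ range (n+1), (n.choose k : ℝ) • g k) :
    ∀ n, f n = g n := by
  intro n
  induction n using Nat.strong_induction_on with
  | _ n ih =>
    have h' := h n
    rw [sum_range_succ, sum_range_succ, Nat.choose_self, Nat.cast_one, one_smul, one_smul] at h'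
    have hs : ∑ k ∈ range n, (n.choose k : ℝ) • f k = ∑ k ∈ range n, (n.choose k : ℝ) • g k :=
      Finset.sum_congr rfl (fun k hk => by rw [ih k (mem_range.mp hk)])
    rw [hs] at h'
    have h2 : (2:ℝ) • f n = (2:ℝ) • g n := by
      rw [two_smul, two_smul]
      linear_combination h' 
    exact smul_right_injective _ two_ne_zero h2

lemma doubleSum (f : ℕ → ℝ[X]) (b c : ℝ) (n : ℕ) :
    ∑ m ∈ range (n+1), ((n.choose m : ℝ) * b^(n-m)) •
      ∑ k ∈ range (m+1), ((m.choose k : ℝ) * c^(m-k)) • f k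
    = ∑ k ∈ range (n+1), ((n.choose k : ℝ) * (c+b)^(n-k)) • f k := by
  simp_rw [Finset.smul_sum, smul_smul]
  have swap := Finset.sum_Ico_Ico_comm 0 (n+1)
    (fun k m => (((n.choose m : ℝ) * b^(n-m)) * ((m.choose k : ℝ) * c^(m-k))) • f k)
  simp only [← Finset.range_eq_Ico] at swap
  rw [← swap]
  refine Finset.sum_congr rfl (fun k hk => ?_)
  rw [Finset.mem_range] at hk
  have hkn : k ≤ n := by omega
  rw [← Finset.sum_smul]
  congr 1
  rw [Finset.sum_Ico_eq_sum_range]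
  have hlen : n + 1 - k = (n - k) + 1 := by omega
  rw [hlen, add_pow, Finset.mul_sum]
  refine Finset.sum_congr rfl (fun j hj => ?_)
  rw [Finset.mem_range] at hj
  have hj' : j ≤ n - k := by omega
  have hcm : (n.choose (k+j) : ℝ) * ((k+j).choose k : ℝ) = (n.choose k : ℝ) * ((n-k).choose j : ℝ) := by
    rw [← Nat.cast_mul, ← Nat.cast_mul, Nat.choose_mul (by omega)]
    congr 3
    omega
  have e1 : n - (k + j) = n - k - j := by omega
  have e2 : k + j - k = j := by omega
  rw [e1, e2]
  linear_combination (b ^ (n-k-j) * c ^ j) * hcm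

lemma shift (a : ℝ) (n : ℕ) :
    (pr n).comp (X + C a) = ∑ k ∈ range (n+1), ((n.choose k : ℝ) * a^(n-k)) • pr k := by
  refine uniq2 (fun m => (pr m).comp (X + C a))
    (fun m => ∑ k ∈ range (m+1), ((m.choose k : ℝ) * a^(m-k)) • pr k) (fun m => ?_) n
  have hcomp : (pr m).comp (X + C a) + ∑ k ∈ range (m+1), ((m.choose k : ℝ)) • (pr k).comp (X + C a)
      = 2 • ((X : ℝ[X]) + C a) ^ m := by
    have := congrArg (fun p => Polynomial.comp p (X + C a)) (pr_rel m)
    simpa [Polynomial.add_comp, Polynomial.smul_comp, Polynomial.pow_comp, Polynomial.X_comp,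
      Polynomial.sum_comp] using this
  have hds : ∑ k ∈ range (m+1), ((m.choose k : ℝ)) •
      (∑ i ∈ range (k+1), ((k.choose i : ℝ) * a^(k-i)) • pr i)
      = ∑ i ∈ range (m+1), ((m.choose i : ℝ) * (a+1)^(m-i)) • pr i := by
    have := doubleSum pr 1 a m
    simpa [one_pow] using this
  have hds2 : ∑ k ∈ range (m+1), ((m.choose k : ℝ) * a^(m-k)) •
      (∑ i ∈ range (k+1), ((k.choose i : ℝ)) • pr i)
      = ∑ i ∈ range (m+1), ((m.choose i : ℝ) * (a+1)^(m-i)) • pr i := by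
    have := doubleSum pr a 1 m
    simpa [one_pow, add_comm] using this
  have hbin : 2 • ((X : ℝ[X]) + C a) ^ m
      = ∑ k ∈ range (m+1), ((m.choose k : ℝ) * a^(m-k)) • ((2:ℕ) • (X : ℝ[X])^k) := by
    rw [add_pow, Finset.smul_sum]
    refine Finset.sum_congr rfl (fun k _ => ?_)
    rw [smul_comm, smul_eq_C_mul, C_mul, C_pow, Polynomial.C_eq_natCast]
    ring
  have hexp : ∑ k ∈ range (m+1), ((m.choose k : ℝ) * a^(m-k)) • ((2:ℕ) • (X : ℝ[X])^k)
      = ∑ k ∈ range (m+1), (((m.choose k : ℝ) * a^(m-k)) • pr k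
          + ((m.choose k : ℝ) * a^(m-k)) • (∑ i ∈ range (k+1), ((k.choose i : ℝ)) • pr i)) := by
    refine Finset.sum_congr rfl (fun k _ => ?_)
    rw [← smul_add, pr_rel k]
  rw [hcomp, hds, hbin, hexp, Finset.sum_add_distrib, hds2]

lemma reflect (n : ℕ) :
    (pr n).comp (C 1 - X) = ((-1:ℝ))^n • pr n := by
  refine uniq2 (fun m => (pr m).comp (C 1 - X)) (fun m => ((-1:ℝ))^m • pr m) (fun m => ?_) n
  have hcomp : (pr m).comp (C 1 - X) + ∑ k ∈ range (m+1), ((m.choose k : ℝ)) • (pr k).comp (C 1 - X)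
      = 2 • ((C 1 : ℝ[X]) - X) ^ m := by
    have := congrArg (fun p => Polynomial.comp p (C 1 - X)) (pr_rel m)
    simpa [Polynomial.add_comp, Polynomial.smul_comp, Polynomial.pow_comp, Polynomial.X_comp,
      Polynomial.sum_comp] using this
  rw [hcomp]
  -- now show RHS relation: (-1)^m • pr m + ∑ C(m,k) (-1)^k • pr k = 2 • (C1 - X)^m
  have hds := doubleSum pr (-1) 1 m
  have hzero : ∑ k ∈ range (m+1), ((m.choose k : ℝ) * (1 + -1)^(m-k)) • pr k = pr m := by
    rw [Finset.sum_eq_single m]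
    · simp
    · intro k hk hkm
      rw [Finset.mem_range] at hk
      have : m - k ≠ 0 := by omega
      rw [show (1 + -1 : ℝ) = 0 by norm_num, zero_pow this]
      simp
    · intro h; exact absurd (Finset.self_mem_range_succ m) h
  rw [hzero] at hds
  -- inner sums in hds : ∑ i ∈ range (k+1), (C(k,i) * 1^(k-i)) • pr i = 2•X^k - pr k
  have hinner : ∀ k, ∑ i ∈ range (k+1), ((k.choose i : ℝ) * 1^(k-i)) • pr i
      = 2 • (X:ℝ[X])^k - pr k := by
    intro k
    simp only [one_pow, mul_one]
    exact pr_rel' k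
  rw [Finset.sum_congr rfl (fun k _ => by rw [hinner k])] at hds
  -- hds : ∑ k, (C(m,k)*(-1)^(m-k)) • (2•X^k - pr k) = pr m
  have halt : ∑ k ∈ range (m+1), ((m.choose k : ℝ) * (-1)^(m-k)) • pr k
      = 2 • ((X:ℝ[X]) - C 1)^m - pr m := by
    have hxp : ∑ k ∈ range (m+1), ((m.choose k : ℝ) * (-1)^(m-k)) • ((2:ℕ) • (X:ℝ[X])^k)
        = 2 • ((X:ℝ[X]) - C 1)^m := by
      have hb : ((X:ℝ[X]) - C 1)^m = ((X:ℝ[X]) + C (-1))^m := by rw [C_neg]; ring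
      rw [hb, add_pow, Finset.smul_sum]
      refine Finset.sum_congr rfl (fun k _ => ?_)
      rw [smul_comm, smul_eq_C_mul, C_mul, C_pow, Polynomial.C_eq_natCast]
      push_cast
      ring
    calc ∑ k ∈ range (m+1), ((m.choose k : ℝ) * (-1)^(m-k)) • pr k
        = ∑ k ∈ range (m+1), (((m.choose k : ℝ) * (-1)^(m-k)) • ((2:ℕ) • (X:ℝ[X])^k)
            - ((m.choose k : ℝ) * (-1)^(m-k)) • (2 • (X:ℝ[X])^k - pr k)) := by
          refine Finset.sum_congr rfl (fun k _ => ?_)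
          rw [← smul_sub]
          congr 1
          abel
      _ = 2 • ((X:ℝ[X]) - C 1)^m - pr m := by
          rw [Finset.sum_sub_distrib, hxp, hds]
  -- final assembly
  have hsgn : ∑ k ∈ range (m+1), ((m.choose k : ℝ)) • (((-1:ℝ))^k • pr k)
      = ((-1:ℝ))^m • ∑ k ∈ range (m+1), ((m.choose k : ℝ) * (-1)^(m-k)) • pr k := by
    rw [Finset.smul_sum]
    refine Finset.sum_congr rfl (fun k hk => ?_)
    rw [Finset.mem_range] at hk
    rw [smul_smul, smul_smul]
    congr 1
    have h2 : ((-1:ℝ))^(m-k) * (-1)^m = (-1)^k := by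
      rw [← pow_add, show m-k+m = 2*(m-k)+k by omega, pow_add, pow_mul]
      norm_num
    linear_combination (-(m.choose k : ℝ)) * h2
  rw [hsgn, halt]
  rw [smul_sub]
  have hp : ((-1:ℝ))^m • ((X:ℝ[X]) - C 1)^m = ((C 1:ℝ[X]) - X)^m := by
    rw [← _root_.smul_pow]
    congr 1
    rw [neg_one_smul, neg_sub]
  have h1 : ((-1:ℝ))^m • (2 • ((X:ℝ[X]) - C 1)^m) = 2 • ((C 1:ℝ[X]) - X)^m := by
    rw [smul_comm, hp]
  rw [h1]
  abel

lemma pr_eval_cast (p : ℚ[X]) (x : ℚ) :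
    (p.map (algebraMap ℚ ℝ)).eval ((x : ℝ)) = ((p.eval x : ℚ) : ℝ) := by
  have : ((x : ℝ)) = algebraMap ℚ ℝ x := by norm_num
  rw [this, Polynomial.eval_map, Polynomial.eval₂_at_apply]
  norm_num

lemma er_eq (n : ℕ) : ((eulerNumber n : ℚ) : ℝ) = 2^n * (pr n).eval (1/2 : ℝ) := by
  have h := pr_eval_cast (eulerPoly n) (1/2)
  rw [eulerNumber]
  push_cast
  rw [pr, show ((1:ℝ)/2) = (((1/2 : ℚ) : ℝ)) by norm_num, h]

lemma er_odd (n : ℕ) (hn : Odd n) : ((eulerNumber n : ℚ) : ℝ) = 0 := by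
  have h := congrArg (Polynomial.eval (1/2 : ℝ)) (reflect n)
  simp only [Polynomial.eval_comp, Polynomial.eval_sub, Polynomial.eval_one, Polynomial.eval_C,
    Polynomial.eval_X, Polynomial.eval_smul, smul_eq_mul] at h
  rw [show (1:ℝ) - 1/2 = 1/2 by norm_num, Odd.neg_one_pow hn] at h
  have : (pr n).eval (1/2 : ℝ) = 0 := by linarith
  rw [er_eq, this, mul_zero]

lemma comp1 (n : ℕ) : (pr n).comp (X + C 1) = 2 • (X:ℝ[X])^n - pr n := by
  rw [shift 1 n, ← pr_rel' n]
  exact Finset.sum_congr rfl (fun k _ => by rw [one_pow, mul_one])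

lemma eval_pair (n : ℕ) (hn : Even n) (v : ℝ) :
    (pr n).eval v + (pr n).eval (2 - v) = 2 * (v - 1)^n := by
  have hA := congrArg (Polynomial.eval (v - 1 : ℝ)) (comp1 n)
  have hB := congrArg (Polynomial.eval (v - 1 : ℝ)) (reflect n)
  simp only [Polynomial.eval_comp, Polynomial.eval_add, Polynomial.eval_sub, Polynomial.eval_one,
    Polynomial.eval_C, Polynomial.eval_X, Polynomial.eval_smul, Polynomial.eval_pow,
    smul_eq_mul, Even.neg_one_pow hn, one_mul] at hA hB
  rw [show v - 1 + 1 = v by ring] at hA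
  rw [show (1:ℝ) - (v - 1) = 2 - v by ring] at hB
  rw [hA, hB]
  push_cast
  ring

lemma shift_eval (a : ℝ) (n : ℕ) :
    (pr n).eval (1/2 + a) = ∑ k ∈ range (n+1), (n.choose k : ℝ) * a^(n-k) * (pr k).eval (1/2) := by
  have h := congrArg (Polynomial.eval (1/2 : ℝ)) (shift a n)
  simp only [Polynomial.eval_comp, Polynomial.eval_add, Polynomial.eval_C, Polynomial.eval_X,
    Polynomial.eval_finset_sum, Polynomial.eval_smul, smul_eq_mul] at h
  rw [h]


lemma lucas_real : ∀ m : ℕ, (lucas m : ℝ) = Real.goldenRatio ^ m + Real.goldenConj ^ m := by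
  intro m
  induction m using Nat.twoStepInduction with
  | zero => norm_num [lucas]
  | one => norm_num [lucas, Real.goldenRatio_add_goldenConj]
  | more m ih1 ih2 =>
    have h1 : Real.goldenRatio ^ (m+2) = Real.goldenRatio ^ (m+1) + Real.goldenRatio ^ m := by
      rw [show m+2 = m+1+1 from rfl, pow_succ, pow_succ]
      linear_combination (Real.goldenRatio^m) * Real.goldenRatio_sq
    have h2 : Real.goldenConj ^ (m+2) = Real.goldenConj ^ (m+1) + Real.goldenConj ^ m := by
      rw [show m+2 = m+1+1 from rfl, pow_succ, pow_succ]
      linear_combination (Real.goldenConj^m) * Real.goldenConj_sq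
    rw [lucas, Nat.cast_add, ih1, ih2, h1, h2]
    ring

lemma lucas_pos : ∀ m : ℕ, 0 < lucas m := by
  intro m
  induction m using Nat.twoStepInduction with
  | zero => norm_num [lucas]
  | one => norm_num [lucas]
  | more m ih1 ih2 => rw [lucas]; omega

lemma sum_range_even_odd (f : ℕ → ℝ) (n : ℕ) :
    ∑ m ∈ range (2*n+1), f m
      = (∑ k ∈ range (n+1), f (2*k)) + ∑ k ∈ range n, f (2*k+1) := by
  induction n with
  | zero => simp
  | succ n ih =>
    have e1 : 2*(n+1)+1 = (2*n+1)+1+1 := by ring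
    rw [e1, sum_range_succ, sum_range_succ, ih,
      sum_range_succ (fun k => f (2*k)) (n+1), sum_range_succ (fun k => f (2*k+1)) n]
    ring_nf

theorem stmt2 (n j : ℕ) (hj : 1 ≤ j) :
    ∑ k ∈ Finset.range (n + 1), ((2 * n).choose (2 * k) : ℝ) *
      (2 : ℝ) ^ (-(2 * (k : ℤ)) - 1) * (lucas (2 * (n - k) * j) : ℝ) *
      (lucas j : ℝ) ^ (2 * k) * ((eulerNumber (2 * k) : ℚ) : ℝ)
      = (5 / 4 : ℝ) ^ n * (Nat.fib j : ℝ) ^ (2 * n) := by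
  obtain ⟨a, ha⟩ : ∃ x : ℝ, x = Real.goldenRatio ^ j := ⟨_, rfl⟩
  obtain ⟨b, hb⟩ : ∃ x : ℝ, x = Real.goldenConj ^ j := ⟨_, rfl⟩
  obtain ⟨t, ht⟩ : ∃ x : ℝ, x = (lucas j : ℝ) / 2 := ⟨_, rfl⟩
  have htpos : (0:ℝ) < (lucas j : ℝ) := by exact_mod_cast lucas_pos j
  have ht0 : t ≠ 0 := by rw [ht]; positivity
  have h2t0 : 2 * t ≠ 0 := by positivity
  have hab : a + b = 2 * t := by rw [ht, ha, hb, ← lucas_real j]; ring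
  set F : ℕ → ℝ := fun m => ((2*n).choose m : ℝ) * ((eulerNumber m : ℚ):ℝ) * t^m
      * (a^(2*n-m) + b^(2*n-m)) with hF
  set G : ℝ → ℝ := fun x => ∑ m ∈ range (2*n+1),
      ((2*n).choose m : ℝ) * ((eulerNumber m : ℚ):ℝ) * t^m * x^(2*n-m) with hGdef
  have hG : ∀ x : ℝ, G x = (2*t)^(2*n) * (pr (2*n)).eval (1/2 + x/(2*t)) := by
    intro x
    rw [hGdef]
    simp only []
    rw [shift_eval (x/(2*t)) (2*n), Finset.mul_sum]
    refine Finset.sum_congr rfl (fun k hk => ?_)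
    rw [Finset.mem_range] at hk
    rw [er_eq k]
    have hsplit : (2*t)^(2*n) = (2*t)^(2*n-k) * (2*t)^k := by
      rw [← pow_add]; congr 1; omega
    have hne : ((2*t)^(2*n-k)) ≠ 0 := pow_ne_zero _ h2t0
    have e2 : (2*t)^(2*n) * (x/(2*t))^(2*n-k) = (2*t)^k * x^(2*n-k) := by
      rw [div_pow, hsplit]
      field_simp
    linear_combination (-(((2*n).choose k : ℝ) * (pr k).eval (1/2))) * e2
  have hGaGb : G a + G b = ∑ m ∈ range (2*n+1), F m := by
    rw [hGdef, hF, ← Finset.sum_add_distrib]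
    exact Finset.sum_congr rfl (fun m _ => by ring)
  have hodd : ∑ m ∈ range (2*n+1), F m = ∑ k ∈ range (n+1), F (2*k) := by
    rw [sum_range_even_odd F n]
    have : ∑ k ∈ range n, F (2*k+1) = 0 := by
      refine Finset.sum_eq_zero (fun k _ => ?_)
      rw [hF]
      simp only []
      rw [er_odd (2*k+1) (Nat.odd_iff.mpr (by omega))]
      ring
    rw [this, add_zero]
  obtain ⟨v, hv⟩ : ∃ x : ℝ, x = 1/2 + a/(2*t) := ⟨_, rfl⟩
  have h2v : 2 - v = 1/2 + b/(2*t) := by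
    rw [hv]
    field_simp
    linear_combination -hab
  have hkey : G a + G b = 2 * ((a-b)/2)^(2*n) := by
    have hvb : G b = (2*t)^(2*n) * (pr (2*n)).eval (2 - v) := by rw [hG b, h2v]
    have hva : G a = (2*t)^(2*n) * (pr (2*n)).eval v := by rw [hG a, hv]
    have hpair := eval_pair (2*n) (even_two_mul n) v
    have hv1 : (2*t) * (v - 1) = (a-b)/2 := by
      rw [hv]
      field_simp
      linear_combination hab
    calc G a + G b = (2*t)^(2*n) * ((pr (2*n)).eval v + (pr (2*n)).eval (2 - v)) := by
          rw [hva, hvb]; ring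
      _ = (2*t)^(2*n) * (2 * (v-1)^(2*n)) := by rw [hpair]
      _ = 2 * ((2*t) * (v-1))^(2*n) := by rw [mul_pow (2*t) (v-1) (2*n)]; ring
      _ = 2 * ((a-b)/2)^(2*n) := by rw [hv1]
  have hfib : a - b = Real.sqrt 5 * (Nat.fib j : ℝ) := by
    have hfib' := Real.coe_fib_eq j
    rw [← ha, ← hb] at hfib'
    rw [hfib']
    have h5 : Real.sqrt 5 ≠ 0 := by positivity
    field_simp
  have hterm : ∀ k, k ∈ range (n+1) →
      ((2 * n).choose (2 * k) : ℝ) * (2 : ℝ) ^ (-(2 * (k : ℤ)) - 1) *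
        (lucas (2 * (n - k) * j) : ℝ) * (lucas j : ℝ) ^ (2 * k) * ((eulerNumber (2 * k) : ℚ) : ℝ)
      = 1/2 * F (2*k) := by
    intro k hk
    rw [Finset.mem_range] at hk
    have hz : (2 : ℝ) ^ (-(2 * (k : ℤ)) - 1) = ((2:ℝ)^(2*k+1))⁻¹ := by
      rw [show (-(2 * (k : ℤ)) - 1) = -((2*k+1 : ℕ) : ℤ) by push_cast; ring, zpow_neg,
        zpow_natCast]
    have hl : (lucas (2 * (n - k) * j) : ℝ) = a^(2*n-2*k) + b^(2*n-2*k) := by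
      have e : 2*(n-k)*j = j*(2*n-2*k) := by
        rw [show 2*(n-k) = 2*n-2*k from by omega, Nat.mul_comm]
      rw [lucas_real, e, pow_mul, pow_mul, ← ha, ← hb]
    have hlj : (lucas j : ℝ) = 2*t := by rw [ht]; ring
    rw [hz, hl, hlj, hF]
    simp only []
    rw [mul_pow 2 t (2*k), pow_succ]
    have h2k : (2:ℝ)^(2*k) ≠ 0 := by positivity
    field_simp
  rw [Finset.sum_congr rfl hterm, ← Finset.mul_sum, ← hodd, ← hGaGb, hkey, hfib]
  have hs5 : (Real.sqrt 5)^2 = 5 := Real.sq_sqrt (by norm_num)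
  rw [pow_mul, pow_mul]
  rw [show (Real.sqrt 5 * (Nat.fib j : ℝ) / 2)^2
      = 5/4 * ((Nat.fib j : ℝ))^2 by rw [div_pow, mul_pow, hs5]; ring]
  rw [mul_pow]
  ring
end

section
/- For all n ≥ 0 and j ≥ 1, ∑_{k=0}^{n} C(n,k) (√5 F_j)^{n-k} F_{jk} B_{n-k} = n F_j β^{j(n-1)}, where β = (1 - √5)/2 and B_m are Bernoulli numbers. -/
open Polynomial goldenRatio Real Finset

lemma bern_comp (n : ℕ) :
    (Polynomial.bernoulli n).comp (1 + Polynomial.X) =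
      Polynomial.bernoulli n + (n : ℚ) • Polynomial.X ^ (n - 1) := by
  apply Polynomial.funext
  intro q
  simp [Polynomial.eval_comp, Polynomial.bernoulli_eval_one_add, smul_eq_mul]

lemma bern_real_eval_one_add (n : ℕ) (x : ℝ) :
    ((Polynomial.bernoulli n).map (algebraMap ℚ ℝ)).eval (1 + x)
      = ((Polynomial.bernoulli n).map (algebraMap ℚ ℝ)).eval x + n * x ^ (n - 1) := by
  have h := congrArg (Polynomial.map (algebraMap ℚ ℝ)) (bern_comp n)
  rw [Polynomial.map_comp] at h
  have h2 := congrArg (Polynomial.eval x) h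
  simpa [Polynomial.eval_comp] using h2

lemma bern_real_eval (n : ℕ) (x : ℝ) :
    ((Polynomial.bernoulli n).map (algebraMap ℚ ℝ)).eval x
      = ∑ i ∈ Finset.range (n+1),
          ((bernoulli i : ℚ) : ℝ) * (n.choose i : ℝ) * x ^ (n - i) := by
  simp [Polynomial.bernoulli, Polynomial.map_sum, Polynomial.eval_finset_sum,
    Polynomial.eval_monomial]

lemma sum_eq (n : ℕ) (s y : ℝ) (hs : s ≠ 0) :
    ∑ k ∈ Finset.range (n + 1), (n.choose k : ℝ) * s ^ (n - k) * y ^ k *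
        ((bernoulli (n - k) : ℚ) : ℝ)
      = s ^ n * ((Polynomial.bernoulli n).map (algebraMap ℚ ℝ)).eval (y / s) := by
  rw [bern_real_eval, Finset.mul_sum, ← Finset.sum_range_reflect]
  apply Finset.sum_congr rfl
  intro k hk
  rw [Finset.mem_range] at hk
  have hk' : k ≤ n := Nat.lt_succ_iff.mp hk
  simp only [Nat.add_sub_cancel]
  rw [Nat.choose_symm hk', Nat.sub_sub_self hk']
  have hsn : s ^ n = s ^ (n - k) * s ^ k := by
    rw [← pow_add, Nat.sub_add_cancel hk']
  rw [hsn, div_pow]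
  field_simp

theorem stmt4 (n j : ℕ) (hj : 1 ≤ j) :
    ∑ k ∈ Finset.range (n + 1), (n.choose k : ℝ) *
      (Real.sqrt 5 * (Nat.fib j : ℝ)) ^ (n - k) * (Nat.fib (j * k) : ℝ) *
      ((bernoulli (n - k) : ℚ) : ℝ)
      = (n : ℝ) * (Nat.fib j : ℝ) * ((1 - Real.sqrt 5) / 2) ^ (j * (n - 1)) := by
  rcases Nat.eq_zero_or_pos n with rfl | hn
  · simp
  have h5 : (0:ℝ) < Real.sqrt 5 := Real.sqrt_pos.mpr (by norm_num)
  have hfib : (0:ℝ) < (Nat.fib j : ℝ) := by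
    exact_mod_cast Nat.cast_pos.mpr (Nat.fib_pos.mpr hj)
  set s : ℝ := Real.sqrt 5 * (Nat.fib j : ℝ) with hs_def
  have hspos : 0 < s := mul_pos h5 hfib
  have hs : s ≠ 0 := ne_of_gt hspos
  have hsval : s = φ ^ j - ψ ^ j := by
    rw [hs_def, Real.coe_fib_eq j]
    field_simp
  have hsplit : ∑ k ∈ Finset.range (n + 1), (n.choose k : ℝ) *
      s ^ (n - k) * (Nat.fib (j * k) : ℝ) * ((bernoulli (n - k) : ℚ) : ℝ)
      = ((∑ k ∈ Finset.range (n + 1), (n.choose k : ℝ) * s ^ (n - k) * (φ ^ j) ^ k *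
            ((bernoulli (n - k) : ℚ) : ℝ))
        - (∑ k ∈ Finset.range (n + 1), (n.choose k : ℝ) * s ^ (n - k) * (ψ ^ j) ^ k *
            ((bernoulli (n - k) : ℚ) : ℝ))) / Real.sqrt 5 := by
    rw [← Finset.sum_sub_distrib, Finset.sum_div]
    apply Finset.sum_congr rfl
    intro k _
    rw [Real.coe_fib_eq (j * k), pow_mul, pow_mul]
    field_simp
  rw [hsplit, sum_eq n s _ hs, sum_eq n s _ hs]
  have hx : φ ^ j / s = 1 + ψ ^ j / s := by
    have h1 : φ ^ j / s - ψ ^ j / s = 1 := by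
      rw [div_sub_div_same, ← hsval, div_self hs]
    linarith
  rw [hx, bern_real_eval_one_add]
  have hψ : ((1 - Real.sqrt 5) / 2 : ℝ) = ψ := rfl
  rw [hψ]
  have hsn : s ^ n = s * s ^ (n - 1) := by
    rw [← pow_succ', Nat.sub_add_cancel hn]
  rw [div_pow, pow_mul, hsn]
  have hfj : s / Real.sqrt 5 = (Nat.fib j : ℝ) := by
    rw [hs_def]; field_simp
  field_simp
  rw [add_sub_cancel_left, ← hψ]
  simp only [div_pow, mul_pow]
  rw [hs_def]
  have hf0 := hfib.ne'
  field_simp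
end

section
/- For all n ≥ 0, ∑_{k=0}^{⌊n/2⌋} C(n,2k) (45/4)^k L_{4(n-2k)} E_{2k} = 2 (7/2)^n, where L_m are Lucas numbers and E_m are Euler numbers. -/
open PowerSeries

lemma eulerPoly_def' (n : ℕ) : eulerPoly n = Polynomial.X ^ n - Polynomial.C (1/2 : ℚ) *
      ∑ k ∈ Finset.range n, (n.choose k : ℚ) • eulerPoly k := by
  rw [eulerPoly, ← Fin.sum_univ_eq_sum_range]

lemma eulerK (n : ℕ) :
    ∑ k ∈ Finset.range (n+1), (n.choose k : ℚ) * eulerNumber k * 2 ^ (n - k)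
      + eulerNumber n = 2 := by
  have h := congrArg (Polynomial.eval (1/2 : ℚ)) (eulerPoly_def' n)
  simp only [Polynomial.eval_sub, Polynomial.eval_pow, Polynomial.eval_X,
    Polynomial.eval_mul, Polynomial.eval_C, Polynomial.eval_finset_sum,
    Polynomial.eval_smul, smul_eq_mul] at h
  have he : ∀ k, (eulerPoly k).eval (1/2) = eulerNumber k / 2 ^ k := by
    intro k; rw [eulerNumber]; field_simp
  simp only [he] at h
  rw [Finset.sum_range_succ]
  rw [Nat.choose_self, Nat.sub_self]
  have key : ∑ k ∈ Finset.range n, (n.choose k : ℚ) * eulerNumber k * 2 ^ (n - k)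
      = 2^n * ∑ k ∈ Finset.range n, (n.choose k : ℚ) * (eulerNumber k / 2 ^ k) := by
    rw [Finset.mul_sum]
    apply Finset.sum_congr rfl
    intro k hk
    have hk' : k ≤ n := le_of_lt (Finset.mem_range.mp hk)
    rw [pow_sub₀ (2:ℚ) two_ne_zero hk']
    have : (2:ℚ)^k ≠ 0 := by positivity
    field_simp
  rw [key]
  have h' : ∑ x ∈ Finset.range n, (n.choose x : ℚ) * (eulerNumber x / 2 ^ x)
      = 2 * ((1/2)^n - eulerNumber n / 2^n) := by
    linarith [h]
  rw [h']
  have h2 : (2:ℚ)^n ≠ 0 := by positivity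
  push_cast
  field_simp
  rw [← mul_pow]; norm_num
  ring

noncomputable def eulerF : PowerSeries ℝ :=
  PowerSeries.mk (fun k => (eulerNumber k : ℝ) / k.factorial)

lemma hF : eulerF * (rescale (2:ℝ) (exp ℝ) + 1) = PowerSeries.C 2 * exp ℝ := by
  ext n
  rw [coeff_mul, Finset.Nat.sum_antidiagonal_eq_sum_range_succ_mk]
  have hc : ∀ k : ℕ, k ≤ n → (coeff k) eulerF *
      (coeff (n-k)) (rescale (2:ℝ) (exp ℝ) + 1)
      = (eulerNumber k : ℝ) / k.factorial * (2^(n-k) / (n-k).factorial)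
        + if k = n then (eulerNumber n : ℝ) / n.factorial else 0 := by
    intro k hk
    rw [map_add, coeff_rescale, coeff_exp]
    rw [PowerSeries.coeff_one]
    simp only [eulerF, coeff_mk]
    rcases eq_or_lt_of_le hk with h | h
    · subst h; simp; ring
    · have h1 : n - k ≠ 0 := by omega
      have h2 : k ≠ n := by omega
      simp only [h1, h2, if_false, add_zero]
      push_cast
      ring
  rw [Finset.sum_congr rfl (fun k hk => hc k (Nat.lt_succ_iff.mp (Finset.mem_range.mp hk)))]
  rw [Finset.sum_add_distrib, Finset.sum_ite_eq' (Finset.range (n+1)) n]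
  simp only [Finset.mem_range, Nat.lt_succ_self, if_true]
  rw [coeff_C_mul, coeff_exp]
  have hK : ∑ k ∈ Finset.range (n+1), ((n.choose k : ℝ)) * (eulerNumber k : ℝ) * 2 ^ (n - k)
      + (eulerNumber n : ℝ) = 2 := by
    have := eulerK n
    have := congrArg (fun q : ℚ => (q : ℝ)) this
    push_cast at this
    convert this using 2
  have hsum : ∑ k ∈ Finset.range (n+1),
      (eulerNumber k : ℝ) / k.factorial * (2^(n-k) / (n-k).factorial)
      = (∑ k ∈ Finset.range (n+1), ((n.choose k : ℝ)) * (eulerNumber k : ℝ) * 2 ^ (n - k)) / n.factorial := by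
    rw [Finset.sum_div]
    apply Finset.sum_congr rfl
    intro k hk
    have hk' : k ≤ n := Nat.lt_succ_iff.mp (Finset.mem_range.mp hk)
    rw [Nat.cast_choose ℝ hk']
    have h1 : (k.factorial : ℝ) ≠ 0 := by positivity
    have h2 : ((n-k).factorial : ℝ) ≠ 0 := by positivity
    have h3 : (n.factorial : ℝ) ≠ 0 := by positivity
    field_simp
  rw [hsum, ← add_div, hK]
  simp [algebraMap]
  ring

lemma rescale_C' (a r : ℝ) : rescale a (PowerSeries.C r) = PowerSeries.C r := by
  ext n
  rw [coeff_rescale]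
  cases n with
  | zero => simp
  | succ m => simp [PowerSeries.coeff_C]

lemma ident (x y : ℝ) (n : ℕ) :
    ∑ j ∈ Finset.range (n+1), (n.choose j : ℝ) * (eulerNumber j : ℝ) * x^j *
      ((y+x)^(n-j) + (y-x)^(n-j)) = 2 * y^n := by
  have h1 := congrArg (rescale x) hF
  rw [map_mul, map_add, map_one, rescale_rescale, map_mul, rescale_C'] at h1
  have h2 := congrArg (· * rescale (y - x) (exp ℝ)) h1
  rw [mul_assoc (rescale x eulerF), add_mul, one_mul, mul_assoc ((PowerSeries.C) (2:ℝ))] at h2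
  rw [exp_mul_exp_eq_exp_add, exp_mul_exp_eq_exp_add] at h2
  have e1 : 2 * x + (y - x) = y + x := by ring
  have e2 : x + (y - x) = y := by ring
  rw [e1, e2] at h2
  have h3 := congrArg (fun f => (n.factorial : ℝ) * coeff n f) h2
  rw [coeff_mul, Finset.Nat.sum_antidiagonal_eq_sum_range_succ_mk] at h3
  rw [coeff_C_mul, coeff_rescale, coeff_exp] at h3
  simp only [map_add, coeff_rescale, coeff_exp, eulerF, coeff_mk] at h3
  have hna : (n.factorial : ℝ) ≠ 0 := by positivity
  have hrhs : (n.factorial : ℝ) * (2 * (y ^ n * (algebraMap ℚ ℝ) (1 / n.factorial)))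
      = 2 * y ^ n := by
    simp [algebraMap]
    field_simp
  rw [hrhs, Finset.mul_sum] at h3
  rw [← h3]
  apply Finset.sum_congr rfl
  intro k hk
  have hk' : k ≤ n := Nat.lt_succ_iff.mp (Finset.mem_range.mp hk)
  rw [Nat.cast_choose ℝ hk']
  have h1' : (k.factorial : ℝ) ≠ 0 := by positivity
  have h2' : ((n-k).factorial : ℝ) ≠ 0 := by positivity
  simp only [algebraMap, Algebra.algebraMap_self, RingHom.id_apply]
  simp only [map_div₀, map_one, map_natCast, map_inv₀]
  field_simp

lemma lucas_step (n : ℕ) : lucas (n+2) = lucas (n+1) + lucas n := rfl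

lemma lucas_rec (n : ℕ) : lucas (n+8) + lucas n = 7 * lucas (n+4) := by
  have h8 : lucas (n+8) = lucas (n+7) + lucas (n+6) := lucas_step (n+6)
  have h7 : lucas (n+7) = lucas (n+6) + lucas (n+5) := lucas_step (n+5)
  have h6 : lucas (n+6) = lucas (n+5) + lucas (n+4) := lucas_step (n+4)
  have h5 : lucas (n+5) = lucas (n+4) + lucas (n+3) := lucas_step (n+3)
  have h4 : lucas (n+4) = lucas (n+3) + lucas (n+2) := lucas_step (n+2)
  have h3 : lucas (n+3) = lucas (n+2) + lucas (n+1) := lucas_step (n+1)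
  have h2 : lucas (n+2) = lucas (n+1) + lucas n := lucas_step n
  omega

lemma lucas4 (α β : ℝ) (hs : α + β = 7) (hp : α * β = 1) :
    ∀ m : ℕ, ((lucas (4*m) : ℝ)) = α ^ m + β ^ m
  | 0 => by norm_num [lucas]
  | 1 => by
      have h4 : lucas 4 = 7 := rfl
      norm_num [h4, hs]
  | (m+2) => by
      have h0 := lucas4 α β hs hp m
      have h1 := lucas4 α β hs hp (m+1)
      have hr := lucas_rec (4*m)
      have hrr : (lucas (4*m+8) : ℝ) + (lucas (4*m) : ℝ) = 7 * (lucas (4*m+4) : ℝ) := by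
        exact_mod_cast congrArg (fun q : ℕ => (q:ℝ)) hr
      have e4 : 4*(m+2) = 4*m+8 := by ring
      have e41 : 4*(m+1) = 4*m+4 := by ring
      rw [e41] at h1
      rw [e4]
      have h5 : (lucas (4*m+8) : ℝ) = 7 * (α^(m+1)+β^(m+1)) - (α^m+β^m) := by
        rw [← h0, ← h1]; linarith
      rw [h5]
      linear_combination (-(α^(m+1)+β^(m+1))) * hs + (α^m+β^m) * hp

lemma sum_pair (g : ℕ → ℝ) : ∀ m : ℕ,
    ∑ j ∈ Finset.range (2*m), g j = ∑ k ∈ Finset.range m, (g (2*k) + g (2*k+1))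
  | 0 => by simp
  | (m+1) => by
    have e : 2*(m+1) = (2*m)+1+1 := by ring
    rw [Finset.sum_range_succ, ← sum_pair g m, e, Finset.sum_range_succ,
      Finset.sum_range_succ]
    ring

theorem stmt14 (n : ℕ) :
    ∑ k ∈ Finset.range (n / 2 + 1), (n.choose (2 * k) : ℝ) * (45 / 4 : ℝ) ^ k *
      (lucas (4 * (n - 2 * k)) : ℝ) * ((eulerNumber (2 * k) : ℚ) : ℝ)
      = 2 * (7 / 2 : ℝ) ^ n := by
  obtain ⟨x, hx2⟩ : ∃ x : ℝ, x^2 = 45/4 :=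
    ⟨Real.sqrt 45 / 2, by rw [div_pow, Real.sq_sqrt (by norm_num : (0:ℝ) ≤ 45)]; norm_num⟩
  set α : ℝ := 7/2 + x with hα
  set β : ℝ := 7/2 - x with hβ
  have hs : α + β = 7 := by rw [hα, hβ]; ring
  have hp : α * β = 1 := by rw [hα, hβ]; linear_combination -hx2
  have hl := lucas4 α β hs hp
  have hA := ident x (7/2) n
  have hB := ident (-x) (7/2) n
  have hb1 : (7:ℝ)/2 + -x = β := by rw [hβ]; ring
  have hb2 : (7:ℝ)/2 - -x = α := by rw [hα]; ring
  rw [hb1, hb2] at hB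
  rw [← hα, ← hβ] at hA
  set g : ℕ → ℝ := fun j => (n.choose j : ℝ) * (eulerNumber j : ℝ) *
    (x^j + (-x)^j) * (α^(n-j) + β^(n-j)) with hg
  have hG : ∑ j ∈ Finset.range (n+1), g j = 4 * (7/2:ℝ)^n := by
    have := Finset.sum_add_distrib (s := Finset.range (n+1))
      (f := fun j => (n.choose j : ℝ) * (eulerNumber j : ℝ) * x^j * (α^(n-j) + β^(n-j)))
      (g := fun j => (n.choose j : ℝ) * (eulerNumber j : ℝ) * (-x)^j * (β^(n-j) + α^(n-j)))
    rw [hA, hB] at this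
    rw [show (4:ℝ)*(7/2:ℝ)^n = 2*(7/2:ℝ)^n + 2*(7/2:ℝ)^n by ring, ← this]
    apply Finset.sum_congr rfl
    intro j _
    rw [hg]
    ring
  have hsub : ∑ j ∈ Finset.range (2*(n/2+1)), g j = ∑ j ∈ Finset.range (n+1), g j := by
    symm
    apply Finset.sum_subset
    · apply Finset.range_subset_range.mpr; omega
    · intro j hj hnj
      simp only [Finset.mem_range] at hj hnj
      have : n < j := by omega
      rw [hg]
      simp [Nat.choose_eq_zero_of_lt this]
  have hodd : ∀ k : ℕ, g (2*k+1) = 0 := by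
    intro k
    have : (-x)^(2*k+1) = -(x^(2*k+1)) := Odd.neg_pow ⟨k, by ring⟩ x
    rw [hg]
    simp [this]
  have hG2 : ∑ k ∈ Finset.range (n/2+1), g (2*k) = 4 * (7/2:ℝ)^n := by
    rw [← hG, ← hsub, sum_pair g (n/2+1)]
    apply Finset.sum_congr rfl
    intro k _
    rw [hodd k, add_zero]
  have hkey : ∀ k : ℕ, g (2*k) = 2 * ((n.choose (2 * k) : ℝ) * (45 / 4 : ℝ) ^ k *
      (lucas (4 * (n - 2 * k)) : ℝ) * ((eulerNumber (2 * k) : ℚ) : ℝ)) := by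
    intro k
    have hev : (-x)^(2*k) = x^(2*k) := Even.neg_pow ⟨k, by ring⟩ x
    have hxp : x^(2*k) = (45/4:ℝ)^k := by rw [pow_mul, hx2]
    rw [hg]
    simp only [hev, hxp, hl (n - 2*k)]
    ring
  calc ∑ k ∈ Finset.range (n / 2 + 1), (n.choose (2 * k) : ℝ) * (45 / 4 : ℝ) ^ k *
      (lucas (4 * (n - 2 * k)) : ℝ) * ((eulerNumber (2 * k) : ℚ) : ℝ)
      = (∑ k ∈ Finset.range (n/2+1), g (2*k)) / 2 := by
        rw [Finset.sum_div]
        apply Finset.sum_congr rfl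
        intro k _
        rw [hkey k]
        ring
    _ = 2 * (7/2:ℝ)^n := by rw [hG2]; ring
end
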